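/- Under the assumptions of Theorem 4.1 (R twice differentiable, bounded below, L-smooth; F(θ) = ‖∇R(θ)‖² is L₂-smooth; unbiased gradient estimates with variance bound m₁ + m₂‖∇R(θ_k)‖²; step sizes with ∑α_k = ∞ and ∑α_k² < ∞; update θ_{k+1} = θ_k - α_k ḡ_k), one has E[F(θ_{k+1})] - E[F(θ_k)] ≤ 2α_k L E[‖∇R(θ_k)‖²] + (α_k² L₂/2)(m₁/M + ((m₂+M)/M) E[‖∇R(θ_k)‖²]). -/

import Mathlib

/-!
The descent lemma for `F = ‖∇R‖²`: since `∇F` is `L₂`-Lipschitz, the function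
`t ↦ F (x + t • v) - t ⟪∇F x, v⟫ - L₂ t² ‖v‖² / 2` has nonpositive derivative for `t ≥ 0`, so
`F (x + v) ≤ F x + ⟪∇F x, v⟫ + L₂ / 2 ‖v‖²`. Put `v = -α ḡ` and take expectations: unbiasedness
turns the linear term into `-α ⟪∇F θ, ∇R θ⟫`, which is at most `2 α L ‖∇R θ‖²` because
`∇F θ = 2 (D∇R θ)* ∇R θ` and `‖D∇R θ‖ ≤ L`; the quadratic term is controlled by the second moment.
-/

open MeasureTheory
open scoped Gradient RealInnerProductSpace

section

variable {E F : Type*} [NormedAddCommGroup E] [InnerProductSpace ℝ E] [CompleteSpace E]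
  [NormedAddCommGroup F] [InnerProductSpace ℝ F]

theorem apply_add_le_of_lipschitz_gradient {f : E → ℝ} (hf : Differentiable ℝ f) {L : ℝ}
    (hLip : ∀ a b, ‖∇ f a - ∇ f b‖ ≤ L * ‖a - b‖) (x v : E) :
    f (x + v) ≤ f x + ⟪∇ f x, v⟫ + L / 2 * ‖v‖ ^ 2 := by
  set φ : ℝ → ℝ := fun t => f (x + t • v) - t * ⟪∇ f x, v⟫ - L / 2 * t ^ 2 * ‖v‖ ^ 2
  have hφ : ∀ t, HasDerivAt φ (⟪∇ f (x + t • v) - ∇ f x, v⟫ - L * t * ‖v‖ ^ 2) t := by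
    intro t
    have hline : HasDerivAt (fun s : ℝ => x + s • v) v t := by
      simpa using ((hasDerivAt_id t).smul_const v).const_add x
    have hf_line : HasDerivAt (fun s : ℝ => f (x + s • v)) (fderiv ℝ f (x + t • v) v) t :=
      (hf (x + t • v)).hasFDerivAt.comp_hasDerivAt t hline
    refine ((hf_line.sub ((hasDerivAt_id t).mul_const ⟪∇ f x, v⟫)).sub
      (((hasDerivAt_pow 2 t).const_mul (L / 2)).mul_const (‖v‖ ^ 2))).congr_deriv ?_
    simp only [inner_sub_left, inner_gradient_left]
    ring
  have hφ_nonpos : ∀ t ∈ interior (Set.Ici (0 : ℝ)),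
      ⟪∇ f (x + t • v) - ∇ f x, v⟫ - L * t * ‖v‖ ^ 2 ≤ 0 := by
    intro t ht
    rw [interior_Ici, Set.mem_Ioi] at ht
    have hΔ := hLip (x + t • v) x
    rw [add_sub_cancel_left, norm_smul, Real.norm_of_nonneg ht.le] at hΔ
    rw [sub_nonpos]
    calc ⟪∇ f (x + t • v) - ∇ f x, v⟫ ≤ ‖∇ f (x + t • v) - ∇ f x‖ * ‖v‖ :=
          real_inner_le_norm _ _
      _ ≤ L * (t * ‖v‖) * ‖v‖ := by gcongr
      _ = L * t * ‖v‖ ^ 2 := by ring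
  have hanti : AntitoneOn φ (Set.Ici 0) :=
    antitoneOn_of_hasDerivWithinAt_nonpos (convex_Ici 0)
      (fun t _ => (hφ t).continuousAt.continuousWithinAt)
      (fun t _ => (hφ t).hasDerivWithinAt) hφ_nonpos
  have h01 := hanti Set.self_mem_Ici (Set.mem_Ici.2 zero_le_one) zero_le_one
  simp only [φ, one_smul, zero_smul, add_zero, one_mul, zero_mul, sub_zero, one_pow] at h01
  linarith

theorem ContDiff.gradient {f : E → ℝ} {m n : WithTop ℕ∞} (hf : ContDiff ℝ n f)
    (hmn : m + 1 ≤ n) : ContDiff ℝ m (∇ f) :=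
  (InnerProductSpace.toDual ℝ E).symm.contDiff.comp (hf.fderiv_right hmn)

theorem abs_inner_gradient_norm_sq_le {G : E → F} {x : E} (hG : DifferentiableAt ℝ G x)
    {L : ℝ} (hL : ‖fderiv ℝ G x‖ ≤ L) (v : E) :
    |⟪∇ (fun y => ‖G y‖ ^ 2) x, v⟫| ≤ 2 * L * ‖G x‖ * ‖v‖ := by
  rw [inner_gradient_left, hG.hasFDerivAt.norm_sq.fderiv]
  simp only [smul_apply, ContinuousLinearMap.comp_apply, innerSL_apply_apply,
    nsmul_eq_mul, Nat.cast_ofNat]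
  have hGv : ‖fderiv ℝ G x v‖ ≤ L * ‖v‖ := (fderiv ℝ G x).le_of_opNorm_le hL v
  calc |2 * ⟪G x, fderiv ℝ G x v⟫| ≤ 2 * (‖G x‖ * ‖fderiv ℝ G x v‖) := by
        rw [abs_mul, abs_two]
        gcongr
        exact abs_real_inner_le_norm _ _
    _ ≤ 2 * (‖G x‖ * (L * ‖v‖)) := by gcongr
    _ = 2 * L * ‖G x‖ * ‖v‖ := by ring

theorem integral_comp_sub_smul_le {Ω : Type*} [MeasurableSpace Ω] {μ : Measure Ω}
    [IsProbabilityMeasure μ] {f : E → ℝ} (hf : Differentiable ℝ f) {L : ℝ}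
    (hLip : ∀ a b, ‖∇ f a - ∇ f b‖ ≤ L * ‖a - b‖) (x : E) (α : ℝ) {g : Ω → E}
    (hg : Integrable g μ) (hg2 : Integrable (fun ω => ‖g ω‖ ^ 2) μ)
    (hfg : Integrable (fun ω => f (x - α • g ω)) μ) :
    ∫ ω, f (x - α • g ω) ∂μ
      ≤ f x - α * ⟪∇ f x, ∫ ω, g ω ∂μ⟫ + α ^ 2 * L / 2 * ∫ ω, ‖g ω‖ ^ 2 ∂μ := by
  have hpt : ∀ ω, f (x - α • g ω)
      ≤ f x - α * ⟪∇ f x, g ω⟫ + α ^ 2 * L / 2 * ‖g ω‖ ^ 2 := by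
    intro ω
    have h := apply_add_le_of_lipschitz_gradient hf hLip x (-(α • g ω))
    rw [← sub_eq_add_neg, inner_neg_right, real_inner_smul_right, norm_neg, norm_smul,
      mul_pow, Real.norm_eq_abs, sq_abs] at h
    linarith
  have hlin : Integrable (fun ω => f x - α * ⟪∇ f x, g ω⟫) μ :=
    (integrable_const _).sub ((hg.const_inner _).const_mul α)
  have hquad : Integrable (fun ω => α ^ 2 * L / 2 * ‖g ω‖ ^ 2) μ := hg2.const_mul _
  calc ∫ ω, f (x - α • g ω) ∂μ
      ≤ ∫ ω, (f x - α * ⟪∇ f x, g ω⟫ + α ^ 2 * L / 2 * ‖g ω‖ ^ 2) ∂μ :=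
        integral_mono hfg (hlin.add hquad) hpt
    _ = f x - α * ⟪∇ f x, ∫ ω, g ω ∂μ⟫ + α ^ 2 * L / 2 * ∫ ω, ‖g ω‖ ^ 2 ∂μ := by
        rw [integral_add hlin hquad, integral_sub (integrable_const _)
          ((hg.const_inner _).const_mul α), integral_const_mul, integral_const_mul,
          integral_inner hg, integral_const, probReal_univ, one_smul]

end

theorem sq_grad_norm_descent_general {d M : ℕ} {Ω : Type*}
    [MeasureSpace Ω] [IsProbabilityMeasure (volume : Measure Ω)]
    (R : EuclideanSpace ℝ (Fin d) → ℝ) (L L₂ : ℝ)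
    (hL : 0 < L) (hL₂ : 0 < L₂) (hR : ContDiff ℝ 2 R)
    (hLip : ∀ θ θ' : EuclideanSpace ℝ (Fin d),
      ‖gradient R θ - gradient R θ'‖ ≤ L * ‖θ - θ'‖)
    (hLip₂ : ∀ θ θ' : EuclideanSpace ℝ (Fin d),
      ‖gradient (fun x => ‖gradient R x‖ ^ 2) θ
        - gradient (fun x => ‖gradient R x‖ ^ 2) θ'‖ ≤ L₂ * ‖θ - θ'‖)
    (θk : EuclideanSpace ℝ (Fin d)) (αk m₁ m₂ : ℝ)
    (hα : 0 < αk)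
    (gbar : Ω → EuclideanSpace ℝ (Fin d))
    (hint : Integrable gbar) (hint2 : Integrable (fun ω => ‖gbar ω‖ ^ 2))
    (hintF : Integrable (fun ω => ‖gradient R (θk - αk • gbar ω)‖ ^ 2))
    (hmean : ∫ ω, gbar ω = gradient R θk)
    (hsecond : ∫ ω, ‖gbar ω‖ ^ 2
      ≤ m₁ / M + ((m₂ + M) / M) * ‖gradient R θk‖ ^ 2) :
    (∫ ω, ‖gradient R (θk - αk • gbar ω)‖ ^ 2) - ‖gradient R θk‖ ^ 2
      ≤ 2 * αk * L * ‖gradient R θk‖ ^ 2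
        + αk ^ 2 * L₂ / 2
          * (m₁ / M + ((m₂ + M) / M) * ‖gradient R θk‖ ^ 2) := by
  have hG : Differentiable ℝ (∇ R) := (hR.gradient (m := 1) le_rfl).differentiable one_ne_zero
  have hdescent := integral_comp_sub_smul_le (hG.norm_sq ℝ) hLip₂ θk αk hint hint2 hintF
  rw [hmean] at hdescent
  have hcross : -⟪∇ (fun x => ‖∇ R x‖ ^ 2) θk, ∇ R θk⟫ ≤ 2 * L * ‖∇ R θk‖ ^ 2 := by
    rw [sq, ← mul_assoc]
    exact (neg_le_abs _).trans <| abs_inner_gradient_norm_sq_le (hG θk)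
      (norm_fderiv_le_of_lip' ℝ hL.le (.of_forall fun θ => hLip θ θk)) _
  have hvar := mul_le_mul_of_nonneg_left hsecond (by positivity : 0 ≤ αk ^ 2 * L₂ / 2)
  linarith [mul_le_mul_of_nonneg_left hcross hα.le]

/-- Key inequality in the proof of Theorem 4.1: one-step expected change of
`F(θ) = ‖∇R(θ)‖²` along the averaged noisy SGD update. -/
theorem sq_grad_norm_descent {d M : ℕ} (hM : 0 < M) {Ω : Type*}
    [MeasureSpace Ω] [IsProbabilityMeasure (volume : Measure Ω)]
    (R : EuclideanSpace ℝ (Fin d) → ℝ) (L L₂ Rstar : ℝ)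
    (hL : 0 < L) (hL₂ : 0 < L₂) (hR : ContDiff ℝ 2 R)
    (hbdd : ∀ θ, Rstar ≤ R θ)
    (hLip : ∀ θ θ' : EuclideanSpace ℝ (Fin d),
      ‖gradient R θ - gradient R θ'‖ ≤ L * ‖θ - θ'‖)
    (hLip₂ : ∀ θ θ' : EuclideanSpace ℝ (Fin d),
      ‖gradient (fun x => ‖gradient R x‖ ^ 2) θ
        - gradient (fun x => ‖gradient R x‖ ^ 2) θ'‖ ≤ L₂ * ‖θ - θ'‖)
    (θk : EuclideanSpace ℝ (Fin d)) (αk m₁ m₂ : ℝ)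
    (hα : 0 < αk) (hm₁ : 0 ≤ m₁) (hm₂ : 0 ≤ m₂)
    (gbar : Ω → EuclideanSpace ℝ (Fin d))
    (hint : Integrable gbar) (hint2 : Integrable (fun ω => ‖gbar ω‖ ^ 2))
    (hintF : Integrable (fun ω => ‖gradient R (θk - αk • gbar ω)‖ ^ 2))
    (hmean : ∫ ω, gbar ω = gradient R θk)
    (hsecond : ∫ ω, ‖gbar ω‖ ^ 2
      ≤ m₁ / M + ((m₂ + M) / M) * ‖gradient R θk‖ ^ 2) :
    (∫ ω, ‖gradient R (θk - αk • gbar ω)‖ ^ 2) - ‖gradient R θk‖ ^ 2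
      ≤ 2 * αk * L * ‖gradient R θk‖ ^ 2
        + αk ^ 2 * L₂ / 2
          * (m₁ / M + ((m₂ + M) / M) * ‖gradient R θk‖ ^ 2) :=
  sq_grad_norm_descent_general R L L₂ hL hL₂ hR hLip hLip₂ θk αk m₁ m₂ hα gbar hint hint2 hintF
    hmean hsecond
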